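/- arXiv:1510.07550 — 3 statements merged into one kernel-verified Lean document; each statement's English description precedes it below -/
import Mathlib

section
/- Let M be a positive integer, Δ = {φ ∈ ℝ^M : φ_i ≥ 0 for all i, Σ_{i=1}^M φ_i = 1} the standard simplex, b > 0, and L : ℝ^M → ℝ a differentiable function that is bounded above on Δ and satisfies |L(x + h) − L(x) − ⟨∇L(x), h⟩| ≤ b‖h‖² whenever x and x + h both lie in Δ. Let φ[1] ∈ Δ and define φ[n+1] = (1 − 1/n)·φ[n] + (1/n)·e_{i_n}, where e_j denotes the j-th standard basis vector and i_n is any index maximizing the partial derivative ∂L/∂φ_i at φ[n] over i ∈ {1,…,M}. Then the sequence (L(φ[n]))_{n≥1} converges. -/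
/-!
The greedy step moves `φ n` towards the vertex of the simplex at which the gradient of `L` is
largest, so the first-order change of `L` is nonnegative and the Taylor bound gives
`L (φ (n+1)) ≥ L (φ n) - b ‖φ (n+1) - φ n‖²`, where `‖φ (n+1) - φ n‖ ≤ 1/n` (sup norm). Adding
the partial sums of these summable defects to `L ∘ φ` gives a monotone sequence that is bounded
above, hence convergent.
-/

open Filter Topology

theorem exists_tendsto_of_bddAbove_of_summable_sub_le {a s : ℕ → ℝ} (hs : Summable s)
    (hstep : ∀ n, a n - s n ≤ a (n + 1)) (ha : BddAbove (Set.range a)) :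
    ∃ l, Tendsto a atTop (𝓝 l) := by
  set T : ℕ → ℝ := fun n => ∑ k ∈ Finset.range n, s k
  have hT : Tendsto T atTop (𝓝 (∑' k, s k)) := hs.hasSum.tendsto_sum_nat
  have hmono : Monotone (a + T) := monotone_nat_of_le_succ fun n => by
    simp only [Pi.add_apply, T, Finset.sum_range_succ]
    linarith [hstep n]
  have hbdd : BddAbove (Set.range (a + T)) := ha.range_add hT.bddAbove_range
  refine ⟨(⨆ n, (a + T) n) - ∑' k, s k, ?_⟩
  simpa using (tendsto_atTop_ciSup hmono hbdd).sub hT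

theorem ContinuousLinearMap.apply_le_of_mem_stdSimplex {ι : Type*} [Fintype ι] [DecidableEq ι]
    (f : (ι → ℝ) →L[ℝ] ℝ) {x : ι → ℝ} (hx : x ∈ stdSimplex ℝ ι) {i : ι}
    (hi : ∀ j, f (Pi.single j 1) ≤ f (Pi.single i 1)) : f x ≤ f (Pi.single i 1) := by
  rw [← convexHull_rangle_single_eq_stdSimplex] at hx
  obtain ⟨_, ⟨j, rfl⟩, hj⟩ :=
    (f : (ι → ℝ) →ₗ[ℝ] ℝ).convexOn convex_univ |>.exists_ge_of_mem_convexHull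
      (Set.subset_univ _) hx
  exact hj.trans (hi j)

theorem Convex.running_average_mem {E : Type*} [AddCommGroup E] [Module ℝ E] {s : Set E}
    (hs : Convex ℝ s) {φ y : ℕ → E} (h1 : φ 1 ∈ s) (hy : ∀ n, y n ∈ s)
    (hupd : ∀ n, 1 ≤ n → φ (n + 1) = (1 - 1 / (n : ℝ)) • φ n + (1 / (n : ℝ)) • y n) :
    ∀ n, 1 ≤ n → φ n ∈ s := by
  intro n hn
  induction n, hn using Nat.le_induction with
  | base => exact h1
  | succ n hn ih =>
    have hn' : (1 : ℝ) ≤ n := by exact_mod_cast hn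
    rw [hupd n hn]
    exact hs ih (hy n) (by rw [sub_nonneg]; exact div_le_one_of_le₀ hn' (by positivity))
      (by positivity) (by ring)

theorem norm_sub_le_one_of_mem_stdSimplex {ι : Type*} [Fintype ι] {x y : ι → ℝ}
    (hx : x ∈ stdSimplex ℝ ι) (hy : y ∈ stdSimplex ℝ ι) : ‖x - y‖ ≤ 1 :=
  (Metric.dist_le_diam_of_mem (bounded_stdSimplex ι) hx hy).trans diam_stdSimplex_le

theorem stmt_3_general (M : ℕ) (b : ℝ)
    (L : (Fin M → ℝ) → ℝ)
    (hbdd : BddAbove (L '' stdSimplex ℝ (Fin M)))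
    (htaylor : ∀ x h : Fin M → ℝ, x ∈ stdSimplex ℝ (Fin M) →
      x + h ∈ stdSimplex ℝ (Fin M) →
      |L (x + h) - L x - fderiv ℝ L x h| ≤ b * ‖h‖ ^ 2)
    (φ : ℕ → Fin M → ℝ) (hφ1 : φ 1 ∈ stdSimplex ℝ (Fin M))
    (idx : ℕ → Fin M)
    (hmax : ∀ n : ℕ, 1 ≤ n → ∀ j : Fin M,
      fderiv ℝ L (φ n) (Pi.single j 1) ≤ fderiv ℝ L (φ n) (Pi.single (idx n) 1))
    (hupd : ∀ n : ℕ, 1 ≤ n →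
      φ (n + 1) = (1 - 1 / (n : ℝ)) • φ n + (1 / (n : ℝ)) • (Pi.single (idx n) 1 : Fin M → ℝ)) :
    ∃ l : ℝ, Tendsto (fun n => L (φ n)) atTop (nhds l) := by
  have hmem := (convex_stdSimplex ℝ (Fin M)).running_average_mem hφ1
    (fun n => single_mem_stdSimplex ℝ (idx n)) hupd
  have hstep : ∀ n, 1 ≤ n →
      φ (n + 1) - φ n = (1 / (n : ℝ)) • (Pi.single (idx n) 1 - φ n) := fun n hn => by
    rw [hupd n hn]; module
  have hdesc : ∀ n, 1 ≤ n → L (φ n) - b * ‖φ (n + 1) - φ n‖ ^ 2 ≤ L (φ (n + 1)) := by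
    intro n hn
    have hgrad : 0 ≤ fderiv ℝ L (φ n) (φ (n + 1) - φ n) := by
      rw [hstep n hn, map_smul, map_sub, smul_eq_mul]
      exact mul_nonneg (by positivity)
        (sub_nonneg.2 ((fderiv ℝ L (φ n)).apply_le_of_mem_stdSimplex (hmem n hn) (hmax n hn)))
    have := htaylor (φ n) (φ (n + 1) - φ n) (hmem n hn) (by simpa using hmem (n + 1) (by omega))
    rw [add_sub_cancel] at this
    linarith [(abs_le.1 this).1]
  have hsmall : ∀ k : ℕ, ‖φ (k + 2) - φ (k + 1)‖ ^ 2 ≤ 1 / ((k : ℝ) + 1) ^ 2 := by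
    intro k
    rw [hstep (k + 1) (by omega), norm_smul, ← one_div_pow]
    push_cast
    gcongr
    rw [Real.norm_of_nonneg (by positivity)]
    exact mul_le_of_le_one_right (by positivity)
      (norm_sub_le_one_of_mem_stdSimplex (single_mem_stdSimplex ℝ _) (hmem (k + 1) (by omega)))
  have hsum : Summable fun k : ℕ => b * ‖φ (k + 2) - φ (k + 1)‖ ^ 2 :=
    .mul_left b <| .of_nonneg_of_le (fun _ => by positivity) hsmall <| by
      simpa using (Real.summable_one_div_nat_add_rpow 1 2).2 one_lt_two
  obtain ⟨l, hl⟩ := exists_tendsto_of_bddAbove_of_summable_sub_le hsum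
    (fun k => hdesc (k + 1) (by omega))
    (hbdd.mono (Set.range_subset_iff.2 fun k => Set.mem_image_of_mem L (hmem (k + 1) (by omega))))
  exact ⟨l, (tendsto_add_atTop_iff_nat 1).1 hl⟩

/-- For a differentiable objective `L`, bounded above on the standard simplex and with a
quadratic Taylor-remainder bound, the greedy online scheduling policy
`φ (n+1) = (1 - 1/n) • φ n + (1/n) • e (i n)` (where `i n` maximizes the partial
derivative of `L` at `φ n`) produces a convergent sequence of objective values `L (φ n)`. -/
theorem stmt_3 (M : ℕ) (hM : 0 < M) (b : ℝ) (hb : 0 < b)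
    (L : (Fin M → ℝ) → ℝ) (hdiff : Differentiable ℝ L)
    (hbdd : BddAbove (L '' stdSimplex ℝ (Fin M)))
    (htaylor : ∀ x h : Fin M → ℝ, x ∈ stdSimplex ℝ (Fin M) →
      x + h ∈ stdSimplex ℝ (Fin M) →
      |L (x + h) - L x - fderiv ℝ L x h| ≤ b * ‖h‖ ^ 2)
    (φ : ℕ → Fin M → ℝ) (hφ1 : φ 1 ∈ stdSimplex ℝ (Fin M))
    (idx : ℕ → Fin M)
    (hmax : ∀ n : ℕ, 1 ≤ n → ∀ j : Fin M,
      fderiv ℝ L (φ n) (Pi.single j 1) ≤ fderiv ℝ L (φ n) (Pi.single (idx n) 1))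
    (hupd : ∀ n : ℕ, 1 ≤ n →
      φ (n + 1) = (1 - 1 / (n : ℝ)) • φ n + (1 / (n : ℝ)) • (Pi.single (idx n) 1 : Fin M → ℝ)) :
    ∃ l : ℝ, Tendsto (fun n => L (φ n)) atTop (nhds l) :=
  stmt_3_general M b L hbdd htaylor φ hφ1 idx hmax hupd
end

section
/- For parameters a > 0 and b > 0, let U(r) = c·(1/(1 + e^{−a(r−b)}) − d), where c = (1 + e^{ab})/e^{ab} and d = 1/(1 + e^{ab}). Then U(r) > 0 for all r > 0, and the function r ↦ log U(r) is strictly concave on (0, ∞). -/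
/-!
Writing `K = e^{ab}`, the utility is `U(r) = (1 - e^{-ar}) / (1 + K e^{-ar})`, which is positive for
`r > 0`. Hence `log U` is the sum of `log (1 - e^{-ar})`, whose derivative `a / (e^{ar} - 1)` is
strictly decreasing on `(0, ∞)`, and `-log (1 + K e^{-ar})`, whose derivative `a K / (e^{ar} + K)`
is decreasing: a strictly concave plus a concave function.
-/

open Real Set

lemma hasDerivAt_exp_neg_mul (a r : ℝ) :
    HasDerivAt (fun r => exp (-(a * r))) (-a * exp (-(a * r))) r := by
  simpa [mul_comm] using ((hasDerivAt_id r).const_mul a).neg.exp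

section

variable {a : ℝ}

lemma hasDerivAt_log_one_sub_exp_neg_mul {r : ℝ} (h : a * r ≠ 0) :
    HasDerivAt (fun r => log (1 - exp (-(a * r)))) (a / (exp (a * r) - 1)) r := by
  have hne : exp (a * r) - 1 ≠ 0 := sub_ne_zero.2 (mt (exp_eq_one_iff _).1 h)
  have hne' : 1 - exp (-(a * r)) ≠ 0 :=
    sub_ne_zero.2 (Ne.symm (mt (exp_eq_one_iff _).1 (neg_ne_zero.2 h)))
  convert ((hasDerivAt_exp_neg_mul a r).const_sub 1).log hne' using 1
  rw [exp_neg]; field_simp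

lemma hasDerivAt_log_one_add_mul_exp_neg_mul {K : ℝ} (hK : 0 ≤ K) (r : ℝ) :
    HasDerivAt (fun r => log (1 + K * exp (-(a * r)))) (-(a * K / (exp (a * r) + K))) r := by
  have hpos : 0 < 1 + K * exp (-(a * r)) := by positivity
  convert (((hasDerivAt_exp_neg_mul a r).const_mul K).const_add 1).log hpos.ne' using 1
  rw [exp_neg]; field_simp

lemma strictConcaveOn_log_one_sub_exp_neg_mul (ha : 0 < a) :
    StrictConcaveOn ℝ (Ioi 0) (fun r => log (1 - exp (-(a * r)))) := by
  have hderiv : ∀ r ∈ Ioi (0 : ℝ), HasDerivAt (fun r => log (1 - exp (-(a * r))))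
      (a / (exp (a * r) - 1)) r :=
    fun r hr => hasDerivAt_log_one_sub_exp_neg_mul (mul_pos ha hr).ne'
  refine StrictAntiOn.strictConcaveOn_of_deriv (convex_Ioi 0)
    (fun r hr => (hderiv r hr).continuousAt.continuousWithinAt) ?_
  rw [interior_Ioi]
  intro x hx y hy hxy
  rw [(hderiv x hx).deriv, (hderiv y hy).deriv]
  have : 0 < exp (a * x) - 1 := sub_pos.2 (one_lt_exp_iff.2 (mul_pos ha hx))
  gcongr

lemma convexOn_log_one_add_mul_exp_neg_mul (ha : 0 ≤ a) {K : ℝ} (hK : 0 ≤ K) :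
    ConvexOn ℝ univ (fun r => log (1 + K * exp (-(a * r)))) := by
  have hderiv := hasDerivAt_log_one_add_mul_exp_neg_mul (a := a) hK
  refine Monotone.convexOn_univ_of_deriv (fun r => (hderiv r).differentiableAt) ?_
  intro x y hxy
  rw [(hderiv x).deriv, (hderiv y).deriv]
  gcongr

end

lemma sigmoid_utility_eq (a b r : ℝ) :
    (1 + exp (a * b)) / exp (a * b) * (1 / (1 + exp (-a * (r - b))) - 1 / (1 + exp (a * b))) =
      (1 - exp (-(a * r))) / (1 + exp (a * b) * exp (-(a * r))) := by
  have hshift : exp (-a * (r - b)) = exp (a * b) * exp (-(a * r)) := by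
    rw [← exp_add]; ring_nf
  rw [hshift]
  field_simp
  ring

theorem stmt_7_general (a b : ℝ) (ha : 0 < a) (c d : ℝ)
    (hc : c = (1 + Real.exp (a * b)) / Real.exp (a * b))
    (hd : d = 1 / (1 + Real.exp (a * b)))
    (U : ℝ → ℝ)
    (hU : ∀ r : ℝ, U r = c * (1 / (1 + Real.exp (-a * (r - b))) - d)) :
    (∀ r : ℝ, 0 < r → 0 < U r) ∧
      StrictConcaveOn ℝ (Set.Ioi (0 : ℝ)) (fun r => Real.log (U r)) := by
  have hU' (r : ℝ) : U r = (1 - exp (-(a * r))) / (1 + exp (a * b) * exp (-(a * r))) := by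
    rw [hU, hc, hd, sigmoid_utility_eq]
  have hnum {r : ℝ} (hr : 0 < r) : 0 < 1 - exp (-(a * r)) :=
    sub_pos.2 (exp_lt_one_iff.2 (neg_neg_of_pos (mul_pos ha hr)))
  have hden (r : ℝ) : 0 < 1 + exp (a * b) * exp (-(a * r)) := by positivity
  refine ⟨fun r hr => hU' r ▸ div_pos (hnum hr) (hden r), ?_⟩
  have hconcave := (strictConcaveOn_log_one_sub_exp_neg_mul ha).add_concaveOn
    ((convexOn_log_one_add_mul_exp_neg_mul ha.le (exp_pos (a * b)).le).neg.subset
      (subset_univ _) (convex_Ioi 0))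
  refine hconcave.congr fun r hr => ?_
  simp only [Pi.add_apply, Pi.neg_apply, hU', log_div (hnum hr).ne' (hden r).ne']
  ring

/-- The normalized sigmoidal-like utility function is positive on `(0, ∞)`, and its
logarithm is strictly concave on `(0, ∞)`. -/
theorem stmt_7 (a b : ℝ) (ha : 0 < a) (hb : 0 < b) (c d : ℝ)
    (hc : c = (1 + Real.exp (a * b)) / Real.exp (a * b))
    (hd : d = 1 / (1 + Real.exp (a * b)))
    (U : ℝ → ℝ)
    (hU : ∀ r : ℝ, U r = c * (1 / (1 + Real.exp (-a * (r - b))) - d)) :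
    (∀ r : ℝ, 0 < r → 0 < U r) ∧
      StrictConcaveOn ℝ (Set.Ioi (0 : ℝ)) (fun r => Real.log (U r)) :=
  stmt_7_general a b ha c d hc hd U hU
end

section
/- Let M and Z be positive integers, let H_{i,z} ≥ 0 and c_i ≥ 0 be real constants for i ∈ {1,…,M}, z ∈ {1,…,Z}, and let g_i : ℝ → ℝ be concave differentiable functions. Let F = {φ ∈ ℝ^{M×Z} : φ_{i,z} ≥ 0 for all i, z, and Σ_{i=1}^M φ_{i,z} = 1 for each z}, and let L(φ) = Σ_{i=1}^M g_i(c_i + Σ_{z=1}^Z φ_{i,z}·H_{i,z}). Then φ ∈ F maximizes L over F if and only if for every z ∈ {1,…,Z} and every i with φ_{i,z} > 0, g_i'(c_i + Σ_{z'} φ_{i,z'}·H_{i,z'})·H_{i,z} = max_{1 ≤ m ≤ M} g_m'(c_m + Σ_{z'} φ_{m,z'}·H_{m,z'})·H_{m,z}. -/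
/-!
By concavity, `L` lies below its tangent plane at `φ`, so `φ` is a maximizer over the convex
set `F` exactly when the first variation `∑ z, ∑ i, (ψ i z - φ i z) * a i z` is nonpositive for
every `ψ ∈ F`, where `a i z = g_i'(rate_i) H i z` (necessity is Fermat's rule along the segment
from `φ` to `ψ`). Since `F` is a product of simplices, one per resource block, this splits into
one linear program per block, and a probability vector `p` maximizes `q ↦ ∑ i, q i * a i` over
the simplex iff its support lies in the argmax of `a`.
-/

open Finset Set

theorem ConcaveOn.le_add_deriv_mul_sub {s : Set ℝ} {f : ℝ → ℝ} {x y : ℝ} (hf : ConcaveOn ℝ s f)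
    (hx : x ∈ s) (hy : y ∈ s) (hfx : DifferentiableAt ℝ f x) :
    f y ≤ f x + deriv f x * (y - x) := by
  rcases lt_trichotomy x y with hxy | rfl | hyx
  · have h := hf.slope_le_deriv hx hy hxy hfx
    rw [slope_def_field, div_le_iff₀ (sub_pos.mpr hxy)] at h
    linarith
  · simp
  · have h := hf.deriv_le_slope hy hx hyx hfx
    rw [slope_def_field, le_div_iff₀ (sub_pos.mpr hyx)] at h
    linarith

theorem HasDerivAt.nonpos_of_forall_mem_Icc_le {f : ℝ → ℝ} {D : ℝ} (hf : HasDerivAt f D 0)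
    (hmax : ∀ t ∈ Icc (0 : ℝ) 1, f t ≤ f 0) : D ≤ 0 := by
  have hloc : IsLocalMaxOn f (Icc 0 1) 0 := IsMaxOn.localize hmax
  have hcone : (1 : ℝ) ∈ posTangentConeAt (Icc (0 : ℝ) 1) 0 :=
    mem_posTangentConeAt_of_segment_subset (by simp [segment_eq_Icc])
  simpa using hloc.hasFDerivWithinAt_nonpos hf.hasFDerivAt.hasFDerivWithinAt hcone

theorem IsMaxOn.nonpos_of_hasDerivAt_add_smul_sub {E : Type*} [AddCommGroup E] [Module ℝ E]
    {f : E → ℝ} {s : Set E} {x y : E} {D : ℝ} (hmax : IsMaxOn f s x) (hs : Convex ℝ s)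
    (hx : x ∈ s) (hy : y ∈ s) (hD : HasDerivAt (fun t : ℝ => f (x + t • (y - x))) D 0) :
    D ≤ 0 :=
  hD.nonpos_of_forall_mem_Icc_le fun t ht => by
    simpa using hmax (hs.add_smul_sub_mem hx hy ht)

section Simplex

variable {ι : Type*} [Fintype ι]

theorem sum_mul_le_sup' {p : ι → ℝ} (hp : p ∈ stdSimplex ℝ ι) (hne : (univ : Finset ι).Nonempty)
    (a : ι → ℝ) : ∑ i, p i * a i ≤ univ.sup' hne a :=
  calc ∑ i, p i * a i ≤ ∑ i, p i * univ.sup' hne a :=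
        sum_le_sum fun i hi => mul_le_mul_of_nonneg_left (le_sup' a hi) (hp.1 i)
    _ = univ.sup' hne a := by rw [← sum_mul, hp.2, one_mul]

theorem forall_stdSimplex_sum_sub_mul_nonpos_iff {p : ι → ℝ} (hp : p ∈ stdSimplex ℝ ι)
    (hne : (univ : Finset ι).Nonempty) (a : ι → ℝ) :
    (∀ q ∈ stdSimplex ℝ ι, ∑ i, (q i - p i) * a i ≤ 0) ↔
      ∀ i, 0 < p i → a i = univ.sup' hne a := by
  set S := univ.sup' hne a
  have hsub (q : ι → ℝ) : ∑ i, (q i - p i) * a i = ∑ i, q i * a i - ∑ i, p i * a i := by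
    simp only [sub_mul, sum_sub_distrib]
  constructor
  · classical
    intro h
    obtain ⟨m, -, hm⟩ := exists_mem_eq_sup' hne a
    have hS : S ≤ ∑ i, p i * a i := by
      have := h _ (single_mem_stdSimplex ℝ m)
      simp only [hsub, Pi.single_apply, ite_mul, one_mul, zero_mul, sum_ite_eq',
        Finset.mem_univ, if_true] at this
      linarith
    -- `S - ∑ i, p i * a i` is the sum of the nonnegative terms `p i * (S - a i)`
    have hgap : ∑ i, p i * (S - a i) = 0 := by
      have : ∑ i, p i * (S - a i) = S - ∑ i, p i * a i := by
        simp only [mul_sub, sum_sub_distrib, ← sum_mul, hp.2, one_mul]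
      linarith [sum_mul_le_sup' hp hne a]
    intro i hi
    have hterm := (sum_eq_zero_iff_of_nonneg fun j _ =>
      mul_nonneg (hp.1 j) (sub_nonneg.mpr (le_sup' a (Finset.mem_univ j)))).mp hgap i
      (Finset.mem_univ i)
    linarith [(mul_eq_zero.mp hterm).resolve_left hi.ne']
  · intro h q hq
    have hpS : ∑ i, p i * a i = S := by
      rw [← one_mul S, ← hp.2, sum_mul]
      refine sum_congr rfl fun i _ => ?_
      rcases (hp.1 i).eq_or_lt with hi | hi
      · simp [← hi]
      · rw [h i hi]
    rw [hsub, hpS]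
    linarith [sum_mul_le_sup' hq hne a]

end Simplex

section Schedules

variable {ι κ : Type*} [Fintype ι]

variable (ι κ) in
def schedules : Set (ι → κ → ℝ) := {φ | ∀ z, (fun i => φ i z) ∈ stdSimplex ℝ ι}

theorem mem_schedules_iff {φ : ι → κ → ℝ} :
    φ ∈ schedules ι κ ↔ (∀ i z, 0 ≤ φ i z) ∧ ∀ z, ∑ i, φ i z = 1 :=
  ⟨fun h => ⟨fun i z => (h z).1 i, fun z => (h z).2⟩, fun h z => ⟨fun i => h.1 i z, h.2 z⟩⟩

theorem convex_schedules : Convex ℝ (schedules ι κ) :=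
  fun _ hφ _ hψ _ _ ha hb hab z => convex_stdSimplex ℝ ι (hφ z) (hψ z) ha hb hab

theorem forall_schedules_sum_sub_mul_nonpos_iff [Fintype κ] {φ : ι → κ → ℝ}
    (hφ : φ ∈ schedules ι κ) (hne : (univ : Finset ι).Nonempty) (a : ι → κ → ℝ) :
    (∀ ψ ∈ schedules ι κ, ∑ z, ∑ i, (ψ i z - φ i z) * a i z ≤ 0) ↔
      ∀ z i, 0 < φ i z → a i z = univ.sup' hne (fun m => a m z) := by
  refine ⟨fun h z => ?_, fun h ψ hψ => sum_nonpos fun z _ =>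
    (forall_stdSimplex_sum_sub_mul_nonpos_iff (hφ z) hne _).mpr (h z) _ (hψ z)⟩
  classical
  rw [← forall_stdSimplex_sum_sub_mul_nonpos_iff (hφ z) hne]
  intro q hq
  let ψ : ι → κ → ℝ := fun i w => if w = z then q i else φ i w
  have hψ : ψ ∈ schedules ι κ := fun w => by
    by_cases hw : w = z
    · subst hw; simpa [ψ] using hq
    · simpa [ψ, hw] using hφ w
  have := h ψ hψ
  rw [sum_eq_single z (fun w _ hw => by simp [ψ, hw]) (by simp)] at this
  simpa [ψ] using this

end Schedules
noncomputable section

variable {ι κ : Type*} [Fintype κ]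

def rate (c : ι → ℝ) (H : ι → κ → ℝ) (φ : ι → κ → ℝ) (i : ι) : ℝ :=
  c i + ∑ z, φ i z * H i z

variable {c : ι → ℝ} {H : ι → κ → ℝ} {φ ψ : ι → κ → ℝ} in
theorem rate_add_smul_sub (t : ℝ) (i : ι) :
    rate c H (φ + t • (ψ - φ)) i = rate c H φ i + t * ∑ z, (ψ i z - φ i z) * H i z := by
  simp only [rate, Pi.add_apply, Pi.smul_apply, Pi.sub_apply, smul_eq_mul, add_mul,
    sum_add_distrib, mul_sum, mul_assoc, add_assoc]

variable [Fintype ι]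

def totalUtility (g : ι → ℝ → ℝ) (c : ι → ℝ) (H : ι → κ → ℝ) (φ : ι → κ → ℝ) : ℝ :=
  ∑ i, g i (rate c H φ i)

def marginalUtility (g : ι → ℝ → ℝ) (c : ι → ℝ) (H : ι → κ → ℝ) (φ : ι → κ → ℝ)
    (i : ι) (z : κ) : ℝ :=
  deriv (g i) (rate c H φ i) * H i z

def firstVariation (g : ι → ℝ → ℝ) (c : ι → ℝ) (H : ι → κ → ℝ) (φ ψ : ι → κ → ℝ) : ℝ :=
  ∑ z, ∑ i, (ψ i z - φ i z) * marginalUtility g c H φ i z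

variable {g : ι → ℝ → ℝ} {c : ι → ℝ} {H : ι → κ → ℝ} {φ ψ : ι → κ → ℝ}

theorem firstVariation_eq_sum_deriv_mul :
    firstVariation g c H φ ψ =
      ∑ i, deriv (g i) (rate c H φ i) * ∑ z, (ψ i z - φ i z) * H i z := by
  rw [firstVariation, sum_comm]
  refine sum_congr rfl fun i _ => ?_
  rw [mul_sum]
  exact sum_congr rfl fun z _ => by rw [marginalUtility]; ring

theorem hasDerivAt_totalUtility_add_smul_sub
    (hg : ∀ i, DifferentiableAt ℝ (g i) (rate c H φ i)) :
    HasDerivAt (fun t : ℝ => totalUtility g c H (φ + t • (ψ - φ)))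
      (firstVariation g c H φ ψ) 0 := by
  simp only [totalUtility, rate_add_smul_sub, firstVariation_eq_sum_deriv_mul]
  refine HasDerivAt.fun_sum fun i _ => ?_
  have hline : HasDerivAt (fun t : ℝ => rate c H φ i + t * ∑ z, (ψ i z - φ i z) * H i z)
      (∑ z, (ψ i z - φ i z) * H i z) 0 :=
    (hasDerivAt_mul_const _).const_add _
  exact (hg i).hasDerivAt.comp_of_eq 0 hline (by simp)

theorem totalUtility_le_add_firstVariation (hconc : ∀ i, ConcaveOn ℝ univ (g i))
    (hg : ∀ i, DifferentiableAt ℝ (g i) (rate c H φ i)) :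
    totalUtility g c H ψ ≤ totalUtility g c H φ + firstVariation g c H φ ψ := by
  have htangent (i : ι) := (hconc i).le_add_deriv_mul_sub (mem_univ (rate c H φ i))
    (mem_univ (rate c H ψ i)) (hg i)
  have hdiff (i : ι) : rate c H ψ i - rate c H φ i = ∑ z, (ψ i z - φ i z) * H i z := by
    simp only [rate, sub_mul, sum_sub_distrib]; ring
  simp only [hdiff] at htangent
  rw [totalUtility, totalUtility, firstVariation_eq_sum_deriv_mul, ← sum_add_distrib]
  exact sum_le_sum fun i _ => htangent i

end

theorem isMaxOn_totalUtility_iff {ι κ : Type*} [Fintype ι] [Fintype κ] {g : ι → ℝ → ℝ}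
    {c : ι → ℝ} {H : ι → κ → ℝ} {s : Set (ι → κ → ℝ)} {φ : ι → κ → ℝ}
    (hconc : ∀ i, ConcaveOn ℝ univ (g i)) (hg : ∀ i, DifferentiableAt ℝ (g i) (rate c H φ i))
    (hs : Convex ℝ s) (hφ : φ ∈ s) :
    IsMaxOn (totalUtility g c H) s φ ↔ ∀ ψ ∈ s, firstVariation g c H φ ψ ≤ 0 := by
  refine ⟨fun hmax ψ hψ => hmax.nonpos_of_hasDerivAt_add_smul_sub hs hφ hψ
    (hasDerivAt_totalUtility_add_smul_sub hg), fun h ψ hψ => ?_⟩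
  have := totalUtility_le_add_firstVariation (ψ := ψ) hconc hg
  show totalUtility g c H ψ ≤ totalUtility g c H φ
  linarith [h ψ hψ]

theorem stmt_13_general (M Z : ℕ) (hM : 0 < M)
    (H : Fin M → Fin Z → ℝ)
    (c : Fin M → ℝ)
    (g : Fin M → ℝ → ℝ)
    (hconc : ∀ i, ConcaveOn ℝ Set.univ (g i))
    (hdiff : ∀ i, Differentiable ℝ (g i))
    (F : Set (Fin M → Fin Z → ℝ))
    (hF : F = {φ : Fin M → Fin Z → ℝ |
      (∀ i z, 0 ≤ φ i z) ∧ ∀ z, ∑ i, φ i z = 1})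
    (L : (Fin M → Fin Z → ℝ) → ℝ)
    (hL : ∀ φ, L φ = ∑ i, g i (c i + ∑ z, φ i z * H i z))
    (φ : Fin M → Fin Z → ℝ) (hφ : φ ∈ F) :
    (∀ ψ ∈ F, L ψ ≤ L φ) ↔
      ∀ z : Fin Z, ∀ i : Fin M, 0 < φ i z →
        deriv (g i) (c i + ∑ z', φ i z' * H i z') * H i z =
          Finset.univ.sup' (Finset.univ_nonempty_iff.mpr (Fin.pos_iff_nonempty.mp hM))
            (fun m => deriv (g m) (c m + ∑ z', φ m z' * H m z') * H m z) := by
  have hFs : F = schedules (Fin M) (Fin Z) := hF.trans (Set.ext fun _ => mem_schedules_iff.symm)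
  have hLu : L = totalUtility g c H := funext hL
  subst hFs hLu
  rw [← isMaxOn_iff, isMaxOn_totalUtility_iff hconc (fun i => hdiff i _) convex_schedules hφ]
  exact forall_schedules_sum_sub_mul_nonpos_iff hφ _ (marginalUtility g c H φ)

/-- Optimality characterization of the concave scheduling problem: a feasible
scheduling-proportion matrix maximizes `L` over the feasible set iff, on each
resource block, every user scheduled with positive proportion attains the
maximal weighted marginal utility `g_m'(·) * H m z` among all users. -/
theorem stmt_13 (M Z : ℕ) (hM : 0 < M) (hZ : 0 < Z)
    (H : Fin M → Fin Z → ℝ) (hH : ∀ i z, 0 ≤ H i z)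
    (c : Fin M → ℝ) (hc : ∀ i, 0 ≤ c i)
    (g : Fin M → ℝ → ℝ)
    (hconc : ∀ i, ConcaveOn ℝ Set.univ (g i))
    (hdiff : ∀ i, Differentiable ℝ (g i))
    (F : Set (Fin M → Fin Z → ℝ))
    (hF : F = {φ : Fin M → Fin Z → ℝ |
      (∀ i z, 0 ≤ φ i z) ∧ ∀ z, ∑ i, φ i z = 1})
    (L : (Fin M → Fin Z → ℝ) → ℝ)
    (hL : ∀ φ, L φ = ∑ i, g i (c i + ∑ z, φ i z * H i z))
    (φ : Fin M → Fin Z → ℝ) (hφ : φ ∈ F) :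
    (∀ ψ ∈ F, L ψ ≤ L φ) ↔
      ∀ z : Fin Z, ∀ i : Fin M, 0 < φ i z →
        deriv (g i) (c i + ∑ z', φ i z' * H i z') * H i z =
          Finset.univ.sup' (Finset.univ_nonempty_iff.mpr (Fin.pos_iff_nonempty.mp hM))
            (fun m => deriv (g m) (c m + ∑ z', φ m z' * H m z') * H m z) :=
  stmt_13_general M Z hM H c g hconc hdiff F hF L hL φ hφ
end
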